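/- For 0 < q < 1 and |z| < 1, the series Σ_{n=0}^∞ z^n/(q;q)_n converges and equals 1/(z;q)_∞ = 1/∏_{k=0}^∞ (1 - z q^k). -/

import Mathlib

/-!
With `e(w) = ∑ wⁿ/(q;q)ₙ`, the series converges for `|w| < 1` by the ratio test, since
`(q;q)ₙ₊₁/(q;q)ₙ = 1 - qⁿ⁺¹ → 1`. Comparing coefficients gives `e(w)(1 - w) = e(qw)`, and
iterating, `e(z) ∏_{k<N} (1 - zqᵏ) = e(qᴺz)`. As `N → ∞` the right side tends to `e(0) = 1`
because `e` is continuous at `0` (dominated convergence), while the partial products tend to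
`(z;q)_∞`.
-/

open Finset Filter Topology

noncomputable def qPoch (q : ℝ) (m : ℕ) : ℝ := ∏ j ∈ Finset.range m, (1 - q ^ (j + 1))

/-- Tail of the q-exponential e(q;z) starting at index m; I_n(q;z) = qexpTail q z (n+1). -/
noncomputable def qexpTail (q z : ℝ) (m : ℕ) : ℝ := ∑' k : ℕ, z ^ (m + k) / qPoch q (m + k)

noncomputable def qExp (q w : ℝ) : ℝ := ∑' n : ℕ, w ^ n / qPoch q n

section QExp

variable {q : ℝ}

theorem qPoch_zero : qPoch q 0 = 1 := prod_range_zero _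

theorem qPoch_succ (n : ℕ) : qPoch q (n + 1) = qPoch q n * (1 - q ^ (n + 1)) :=
  prod_range_succ _ _

theorem one_sub_pow_succ_pos (hq : |q| < 1) (n : ℕ) : 0 < 1 - q ^ (n + 1) :=
  sub_pos.mpr <| (le_abs_self _).trans_lt <| by
    rw [abs_pow]
    exact pow_lt_one₀ (abs_nonneg q) hq n.succ_ne_zero

theorem qPoch_pos (hq : |q| < 1) (n : ℕ) : 0 < qPoch q n :=
  prod_pos fun j _ => one_sub_pow_succ_pos hq j

theorem summable_pow_div_qPoch (hq : |q| < 1) {w : ℝ} (hw : |w| < 1) :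
    Summable fun n : ℕ => w ^ n / qPoch q n := by
  obtain ⟨r, hwr, hr1⟩ := exists_between hw
  have hratio : Tendsto (fun n : ℕ => |w| / (1 - q ^ (n + 1))) atTop (𝓝 |w|) := by
    have hden : Tendsto (fun n : ℕ => 1 - q ^ (n + 1)) atTop (𝓝 1) := by
      simpa using ((tendsto_pow_atTop_nhds_zero_of_abs_lt_one hq).comp
        (tendsto_add_atTop_nat 1)).const_sub 1
    simpa [div_eq_mul_inv] using (hden.inv₀ one_ne_zero).const_mul |w|
  refine summable_of_ratio_norm_eventually_le hr1 ?_
  filter_upwards [hratio.eventually_le_const hwr] with n hn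
  have hP := qPoch_pos hq n
  have h1 := one_sub_pow_succ_pos hq n
  rw [Real.norm_eq_abs, Real.norm_eq_abs, qPoch_succ, pow_succ, abs_div, abs_div, abs_mul,
    abs_pow, abs_of_pos hP, abs_of_pos (mul_pos hP h1)]
  calc |w| ^ n * |w| / (qPoch q n * (1 - q ^ (n + 1)))
      = |w| / (1 - q ^ (n + 1)) * (|w| ^ n / qPoch q n) := by field_simp
    _ ≤ r * (|w| ^ n / qPoch q n) := by gcongr

theorem qExp_zero : qExp q 0 = 1 := by
  rw [qExp, tsum_eq_single 0 fun n hn => by simp [hn], pow_zero, qPoch_zero, div_one]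

theorem qExp_mul_one_sub (hq : |q| < 1) {w : ℝ} (hw : |w| < 1) :
    qExp q w * (1 - w) = qExp q (q * w) := by
  set a : ℕ → ℝ := fun n => w ^ n / qPoch q n
  have hS : HasSum a (qExp q w) := (summable_pow_div_qPoch hq hw).hasSum
  have hshift : HasSum (fun n => a (n + 1) - w * a n) (qExp q w - 1 - w * qExp q w) := by
    have htail := (hasSum_nat_add_iff' 1).mpr hS
    simp only [sum_range_one, a, pow_zero, qPoch_zero, div_one] at htail
    exact htail.sub (hS.mul_left w)
  have hterm : ∀ n, (q * w) ^ (n + 1) / qPoch q (n + 1) = a (n + 1) - w * a n := by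
    intro n
    have hP := (qPoch_pos hq n).ne'
    have h1 := (one_sub_pow_succ_pos hq n).ne'
    simp only [a, qPoch_succ]
    field_simp
    ring
  have hqw : HasSum (fun n => (q * w) ^ n / qPoch q n) (qExp q w * (1 - w)) := by
    refine (hasSum_nat_add_iff' 1).mp ?_
    rw [sum_range_one, pow_zero, qPoch_zero, div_one,
      show qExp q w * (1 - w) - 1 = qExp q w - 1 - w * qExp q w by ring]
    simpa only [hterm] using hshift
  exact hqw.tsum_eq.symm

theorem qExp_mul_prod_one_sub (hq : |q| < 1) {w : ℝ} (hw : |w| < 1) (N : ℕ) :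
    qExp q w * ∏ k ∈ range N, (1 - w * q ^ k) = qExp q (q ^ N * w) := by
  induction N with
  | zero => simp
  | succ N ih =>
    have hqNw : |q ^ N * w| < 1 := by
      rw [abs_mul, abs_pow]
      exact (mul_le_of_le_one_left (abs_nonneg w) (pow_le_one₀ (abs_nonneg q) hq.le)).trans_lt hw
    rw [prod_range_succ, ← mul_assoc, ih, mul_comm w, qExp_mul_one_sub hq hqNw, ← mul_assoc,
      ← pow_succ']

theorem continuousAt_qExp_zero (hq : |q| < 1) : ContinuousAt (qExp q) 0 := by
  have hhalf : |(1 / 2 : ℝ)| < 1 := by norm_num [abs_of_pos]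
  refine tendsto_tsum_of_dominated_convergence (summable_pow_div_qPoch hq hhalf)
    (fun n => ((continuous_pow n).div_const _).tendsto 0) ?_
  filter_upwards [Metric.closedBall_mem_nhds (0 : ℝ) one_half_pos] with w hw n
  rw [Metric.mem_closedBall, dist_zero_right] at hw
  rw [norm_div, norm_pow, Real.norm_of_nonneg (qPoch_pos hq n).le]
  gcongr
  exact (qPoch_pos hq n).le

end QExp

theorem euler_q_exponential (q z : ℝ) (hq0 : 0 < q) (hq1 : q < 1) (hz : |z| < 1) :
    Summable (fun n : ℕ => z ^ n / qPoch q n) ∧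
    ∑' n : ℕ, z ^ n / qPoch q n = (∏' k : ℕ, (1 - z * q ^ k))⁻¹ := by
  have hq : |q| < 1 := abs_lt.mpr ⟨by linarith, hq1⟩
  refine ⟨summable_pow_div_qPoch hq hz, ?_⟩
  have hmul : Multipliable fun k : ℕ => 1 - z * q ^ k := by
    simpa only [sub_eq_add_neg] using
      Real.multipliable_one_add_of_summable ((summable_geometric_of_abs_lt_one hq).mul_left z).neg
  have hpartial := hmul.hasProd.tendsto_prod_nat.const_mul (qExp q z)
  have hshrink : Tendsto (fun N => q ^ N * z) atTop (𝓝 0) := by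
    simpa using (tendsto_pow_atTop_nhds_zero_of_abs_lt_one hq).mul_const z
  have hone : Tendsto (fun N => qExp q (q ^ N * z)) atTop (𝓝 1) := by
    simpa only [qExp_zero, Function.comp_def] using (continuousAt_qExp_zero hq).tendsto.comp hshrink
  simp only [qExp_mul_prod_one_sub hq hz] at hpartial
  exact eq_inv_of_mul_eq_one_left (tendsto_nhds_unique hpartial hone)
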